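/- Let Ū, U ∈ 𝕆_{p,r} with Uᵀ Ū invertible. Then ‖U⊥ᵀ Ū (Uᵀ Ū)⁻¹‖ = ‖sin Θ(U, Ū)‖ / √(1 − ‖sin Θ(U, Ū)‖²), where ‖sin Θ(U, Ū)‖ = √(1 − σ_r²(Uᵀ Ū)) and ‖·‖ denotes the spectral norm. -/

import Mathlib

/-!
Write `A = UᵀŪ`, `B = U⊥ᵀŪ` and `T = B A⁻¹`. From `UUᵀ + U⊥U⊥ᵀ = 1` and `ŪᵀŪ = 1` we get
`BᵀB + AᵀA = 1`, i.e. `‖By‖² + ‖Ay‖² = ‖y‖²`; substituting `y = A⁻¹x` gives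
`‖Tx‖² + ‖x‖² = ‖A⁻¹x‖²`, hence `‖T‖² + 1 = ‖A⁻¹‖²`. The Rayleigh bound `μ‖y‖² ≤ ‖Ay‖²` for the
least eigenvalue `μ = σ_r²` of `AᵀA`, attained at an eigenvector, gives `‖A⁻¹‖² = 1/μ`. So
`‖T‖² = (1 - μ)/μ`, which is the claim since `‖sin Θ‖² = 1 - μ`.
-/

open Matrix
noncomputable section

theorem Matrix.isHermitian_transpose_mul_self {m n : Type*} [Fintype m] (A : Matrix m n ℝ) :
    (Aᵀ * A).IsHermitian := by
  simpa using Matrix.isHermitian_conjTranspose_mul_self A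

/-- Frobenius norm of a real matrix. -/
def frob {m n : Type*} [Fintype m] [Fintype n] (A : Matrix m n ℝ) : ℝ :=
  Real.sqrt (∑ i, ∑ j, (A i j) ^ 2)

/-- Spectral (operator ℓ²→ℓ²) norm of a real matrix. -/
def spec {m n : Type*} [Fintype m] [Fintype n] [DecidableEq n] (A : Matrix m n ℝ) : ℝ :=
  ‖LinearMap.toContinuousLinearMap (Matrix.toEuclideanLin A)‖

/-- Nuclear norm: sum of singular values (square roots of eigenvalues of AᵀA). -/
def nuc {m n : Type*} [Fintype m] [Fintype n] [DecidableEq n] (A : Matrix m n ℝ) : ℝ :=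
  ∑ i, Real.sqrt ((Matrix.isHermitian_transpose_mul_self A).eigenvalues i)

open Module RCLike

namespace ContinuousLinearMap

variable {𝕜 E F G : Type*} [RCLike 𝕜] [NormedAddCommGroup E] [NormedSpace 𝕜 E]
  [SeminormedAddCommGroup F] [NormedSpace 𝕜 F] [SeminormedAddCommGroup G] [NormedSpace 𝕜 G]

lemma sq_norm_apply_le (f : E →L[𝕜] F) (x : E) : ‖f x‖ ^ 2 ≤ ‖f‖ ^ 2 * ‖x‖ ^ 2 := by
  rw [← mul_pow]
  gcongr
  exact f.le_opNorm x

lemma sq_opNorm_le_of_forall {f : E →L[𝕜] F} {c : ℝ} (hc : 0 ≤ c)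
    (hf : ∀ x, ‖f x‖ ^ 2 ≤ c * ‖x‖ ^ 2) : ‖f‖ ^ 2 ≤ c := by
  have : ‖f‖ ≤ √c := f.opNorm_le_bound (Real.sqrt_nonneg c) fun x => by
    rw [← Real.sqrt_sq (norm_nonneg (f x)), ← Real.sqrt_sq (norm_nonneg x), ← Real.sqrt_mul hc]
    exact Real.sqrt_le_sqrt (hf x)
  calc ‖f‖ ^ 2 ≤ √c ^ 2 := by gcongr
    _ = c := Real.sq_sqrt hc

lemma sq_opNorm_add_one_eq [Nontrivial E] {T : E →L[𝕜] F} {S : E →L[𝕜] G}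
    (h : ∀ x, ‖T x‖ ^ 2 + ‖x‖ ^ 2 = ‖S x‖ ^ 2) : ‖T‖ ^ 2 + 1 = ‖S‖ ^ 2 := by
  have hS : ‖S‖ ^ 2 ≤ ‖T‖ ^ 2 + 1 := sq_opNorm_le_of_forall (by positivity) fun x => by
    rw [← h, add_mul, one_mul]
    grw [T.sq_norm_apply_le x]
  have hS1 : 1 ≤ ‖S‖ ^ 2 := by
    obtain ⟨x, hx⟩ := exists_ne (0 : E)
    refine le_of_mul_le_mul_right ?_ (by positivity : 0 < ‖x‖ ^ 2)
    calc 1 * ‖x‖ ^ 2 ≤ ‖S x‖ ^ 2 := by rw [← h]; linarith [sq_nonneg ‖T x‖]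
      _ ≤ ‖S‖ ^ 2 * ‖x‖ ^ 2 := S.sq_norm_apply_le x
  have hT : ‖T‖ ^ 2 ≤ ‖S‖ ^ 2 - 1 := sq_opNorm_le_of_forall (by linarith) fun x => by
    linarith [h x, S.sq_norm_apply_le x]
  linarith

end ContinuousLinearMap

namespace LinearMap.IsSymmetric

variable {𝕜 E : Type*} [RCLike 𝕜] [NormedAddCommGroup E] [InnerProductSpace 𝕜 E]
  [FiniteDimensional 𝕜 E] {T : E →ₗ[𝕜] E} {n : ℕ}

lemma iInf_eigenvalues_mul_sq_norm_le (hT : T.IsSymmetric) (hn : finrank 𝕜 E = n) (x : E) :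
    (⨅ i, hT.eigenvalues hn i) * ‖x‖ ^ 2 ≤ re (inner 𝕜 (T x) x) := by
  set b := hT.eigenvectorBasis hn
  have hx : ‖x‖ ^ 2 = ∑ i, ‖b.repr x i‖ ^ 2 := by
    rw [← b.repr.norm_map, EuclideanSpace.norm_sq_eq]
  have hTx : re (inner 𝕜 (T x) x) = ∑ i, hT.eigenvalues hn i * ‖b.repr x i‖ ^ 2 := by
    rw [← b.repr.inner_map_map, PiLp.inner_apply, map_sum]
    refine Finset.sum_congr rfl fun i _ => ?_
    rw [hT.eigenvectorBasis_apply_self_apply, ← smul_eq_mul, inner_smul_left, conj_ofReal,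
      re_ofReal_mul, inner_self_eq_norm_sq]
  rw [hx, hTx, Finset.mul_sum]
  exact Finset.sum_le_sum fun i _ =>
    mul_le_mul_of_nonneg_right (ciInf_le (Set.finite_range _).bddBelow i) (sq_nonneg _)

lemma exists_re_inner_eq_iInf_eigenvalues [Nonempty (Fin n)] (hT : T.IsSymmetric)
    (hn : finrank 𝕜 E = n) : ∃ x : E, ‖x‖ = 1 ∧ re (inner 𝕜 (T x) x) = ⨅ i, hT.eigenvalues hn i := by
  obtain ⟨i, hi⟩ := Finite.exists_min (hT.eigenvalues hn)
  have hnorm : ‖hT.eigenvectorBasis hn i‖ = 1 := (hT.eigenvectorBasis hn).orthonormal.1 i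
  refine ⟨hT.eigenvectorBasis hn i, hnorm, ?_⟩
  rw [hT.apply_eigenvectorBasis, inner_smul_left, conj_ofReal, re_ofReal_mul,
    inner_self_eq_norm_sq, hnorm, one_pow, mul_one]
  exact le_antisymm (le_ciInf hi) (ciInf_le (Set.finite_range _).bddBelow i)

end LinearMap.IsSymmetric

namespace Matrix.IsHermitian

variable {𝕜 n : Type*} [RCLike 𝕜] [Fintype n] [DecidableEq n] {A : Matrix n n 𝕜}

lemma iInf_eigenvalues_eq_iInf_eigenvalues_toEuclideanLin (hA : A.IsHermitian) :
    ⨅ i, hA.eigenvalues i =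
      ⨅ j, (isSymmetric_toEuclideanLin_iff.mpr hA).eigenvalues finrank_euclideanSpace j :=
  (Fintype.equivOfCardEq (Fintype.card_fin _)).symm.iInf_comp

lemma iInf_eigenvalues_mul_sq_norm_le (hA : A.IsHermitian) (x : EuclideanSpace 𝕜 n) :
    (⨅ i, hA.eigenvalues i) * ‖x‖ ^ 2 ≤ re (inner 𝕜 (toEuclideanLin A x) x) :=
  hA.iInf_eigenvalues_eq_iInf_eigenvalues_toEuclideanLin ▸
    LinearMap.IsSymmetric.iInf_eigenvalues_mul_sq_norm_le _ _ x

lemma exists_re_inner_eq_iInf_eigenvalues [Nonempty n] (hA : A.IsHermitian) :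
    ∃ x : EuclideanSpace 𝕜 n, ‖x‖ = 1 ∧
      re (inner 𝕜 (toEuclideanLin A x) x) = ⨅ i, hA.eigenvalues i := by
  have : Nonempty (Fin (Fintype.card n)) := ⟨⟨0, Fintype.card_pos⟩⟩
  exact hA.iInf_eigenvalues_eq_iInf_eigenvalues_toEuclideanLin ▸
    LinearMap.IsSymmetric.exists_re_inner_eq_iInf_eigenvalues _ _

end Matrix.IsHermitian

namespace Matrix

variable {m n : Type*} [Fintype m] [Fintype n] [DecidableEq n]

lemma sq_norm_toEuclideanLin_apply (A : Matrix m n ℝ) (x : EuclideanSpace ℝ n) :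
    ‖toEuclideanLin A x‖ ^ 2 = inner ℝ (toEuclideanLin (Aᵀ * A) x) x := by
  classical
  rw [← real_inner_self_eq_norm_sq, toLpLin_mul _ 2, ← conjTranspose_eq_transpose_of_trivial,
    toEuclideanLin_conjTranspose_eq_adjoint, LinearMap.comp_apply, LinearMap.adjoint_inner_left]

lemma sq_norm_add_sq_norm_of_gram_add_eq_one {l : Type*} [Fintype l] {A : Matrix m n ℝ}
    {B : Matrix l n ℝ} (h : Bᵀ * B + Aᵀ * A = 1) (x : EuclideanSpace ℝ n) :
    ‖toEuclideanLin B x‖ ^ 2 + ‖toEuclideanLin A x‖ ^ 2 = ‖x‖ ^ 2 := by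
  rw [sq_norm_toEuclideanLin_apply, sq_norm_toEuclideanLin_apply, ← inner_add_left,
    ← LinearMap.add_apply, ← map_add, h, toLpLin_one, LinearMap.id_apply,
    real_inner_self_eq_norm_sq]

lemma toEuclideanLin_apply_toEuclideanLin_of_mul_eq_one [DecidableEq m] {A : Matrix m n ℝ}
    {B : Matrix n m ℝ} (h : A * B = 1) (x : EuclideanSpace ℝ m) :
    toEuclideanLin A (toEuclideanLin B x) = x := by
  rw [← LinearMap.comp_apply, ← toLpLin_mul, h, toLpLin_one, LinearMap.id_apply]

/-- The squared least singular value `σ_min(A)²` when `A` has at least as many rows as columns. -/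
def gramMinEigenvalue (A : Matrix m n ℝ) : ℝ :=
  ⨅ i, (isHermitian_transpose_mul_self A).eigenvalues i

lemma gramMinEigenvalue_mul_sq_norm_le (A : Matrix m n ℝ) (x : EuclideanSpace ℝ n) :
    A.gramMinEigenvalue * ‖x‖ ^ 2 ≤ ‖toEuclideanLin A x‖ ^ 2 := by
  rw [sq_norm_toEuclideanLin_apply]
  exact (isHermitian_transpose_mul_self A).iInf_eigenvalues_mul_sq_norm_le x

lemma exists_sq_norm_eq_gramMinEigenvalue [Nonempty n] (A : Matrix m n ℝ) :
    ∃ x : EuclideanSpace ℝ n, ‖x‖ = 1 ∧ ‖toEuclideanLin A x‖ ^ 2 = A.gramMinEigenvalue := by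
  simp_rw [sq_norm_toEuclideanLin_apply]
  exact (isHermitian_transpose_mul_self A).exists_re_inner_eq_iInf_eigenvalues

lemma sq_spec_inv_mul_gramMinEigenvalue [Nonempty n] {A : Matrix n n ℝ} (hA : IsUnit A) :
    spec A⁻¹ ^ 2 * A.gramMinEigenvalue = 1 := by
  have hdet := (isUnit_iff_isUnit_det A).mp hA
  have hinv_left := toEuclideanLin_apply_toEuclideanLin_of_mul_eq_one (nonsing_inv_mul A hdet)
  have hinv_right := toEuclideanLin_apply_toEuclideanLin_of_mul_eq_one (mul_nonsing_inv A hdet)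
  obtain ⟨v, hv, hAv⟩ := A.exists_sq_norm_eq_gramMinEigenvalue
  set μ := A.gramMinEigenvalue
  set S := LinearMap.toContinuousLinearMap (toEuclideanLin A⁻¹)
  have hAv_ne : toEuclideanLin A v ≠ 0 := fun h0 => by
    rw [← hinv_left v, h0, map_zero, norm_zero] at hv
    exact zero_ne_one hv
  have hμ : 0 < μ := hAv ▸ pow_pos (norm_pos_iff.mpr hAv_ne) 2
  have hupper : spec A⁻¹ ^ 2 ≤ μ⁻¹ := S.sq_opNorm_le_of_forall (by positivity) fun x => by
    rw [← div_eq_inv_mul, le_div_iff₀ hμ, mul_comm]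
    calc μ * ‖S x‖ ^ 2 ≤ ‖toEuclideanLin A (S x)‖ ^ 2 := A.gramMinEigenvalue_mul_sq_norm_le (S x)
      _ = ‖x‖ ^ 2 := by rw [LinearMap.coe_toContinuousLinearMap', hinv_right]
  have hlower : 1 ≤ spec A⁻¹ ^ 2 * μ := by
    calc (1 : ℝ) = ‖S (toEuclideanLin A v)‖ ^ 2 := by
          rw [LinearMap.coe_toContinuousLinearMap', hinv_left, hv, one_pow]
      _ ≤ spec A⁻¹ ^ 2 * μ := hAv ▸ S.sq_norm_apply_le _
  refine le_antisymm ?_ hlower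
  calc spec A⁻¹ ^ 2 * μ ≤ μ⁻¹ * μ := by gcongr
    _ = 1 := inv_mul_cancel₀ hμ.ne'

lemma sq_norm_mul_inv_add_sq_norm {A : Matrix n n ℝ} {B : Matrix m n ℝ} (hA : IsUnit A)
    (h : Bᵀ * B + Aᵀ * A = 1) (x : EuclideanSpace ℝ n) :
    ‖toEuclideanLin (B * A⁻¹) x‖ ^ 2 + ‖x‖ ^ 2 = ‖toEuclideanLin A⁻¹ x‖ ^ 2 := by
  have hinv := mul_nonsing_inv A ((isUnit_iff_isUnit_det A).mp hA)
  have := sq_norm_add_sq_norm_of_gram_add_eq_one h (toEuclideanLin A⁻¹ x)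
  rwa [toEuclideanLin_apply_toEuclideanLin_of_mul_eq_one hinv, ← LinearMap.comp_apply,
    ← toLpLin_mul] at this

lemma sq_spec_mul_inv_add_one_mul_gramMinEigenvalue [Nonempty n] {A : Matrix n n ℝ}
    {B : Matrix m n ℝ} (hA : IsUnit A) (h : Bᵀ * B + Aᵀ * A = 1) :
    (spec (B * A⁻¹) ^ 2 + 1) * A.gramMinEigenvalue = 1 := by
  have hnorm := ContinuousLinearMap.sq_opNorm_add_one_eq
    (T := LinearMap.toContinuousLinearMap (toEuclideanLin (B * A⁻¹)))
    (S := LinearMap.toContinuousLinearMap (toEuclideanLin A⁻¹)) (sq_norm_mul_inv_add_sq_norm hA h)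
  rw [spec, hnorm]
  exact sq_spec_inv_mul_gramMinEigenvalue hA

end Matrix

theorem stmt_9_general {p r : ℕ} (hr : 0 < r)
    (U Ubar : Matrix (Fin p) (Fin r) ℝ) (Up : Matrix (Fin p) (Fin (p - r)) ℝ)
    (hUbar : Ubarᵀ * Ubar = 1) (hcomp : U * Uᵀ + Up * Upᵀ = 1)
    (hinv : IsUnit (Uᵀ * Ubar)) :
    (let σmin : ℝ :=
      Real.sqrt (⨅ i, (Matrix.isHermitian_transpose_mul_self (Uᵀ * Ubar)).eigenvalues i);
    let s : ℝ := Real.sqrt (1 - σmin ^ 2);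
    spec (Upᵀ * Ubar * (Uᵀ * Ubar)⁻¹) = s / Real.sqrt (1 - s ^ 2)) := by
  have : Nonempty (Fin r) := Fin.pos_iff_nonempty.mp hr
  have hgram : (Upᵀ * Ubar)ᵀ * (Upᵀ * Ubar) + (Uᵀ * Ubar)ᵀ * (Uᵀ * Ubar) = 1 := by
    simp only [transpose_mul, transpose_transpose, Matrix.mul_assoc, ← Matrix.mul_add]
    rw [← Matrix.mul_assoc Up, ← Matrix.mul_assoc U, ← Matrix.add_mul, add_comm, hcomp,
      Matrix.one_mul, hUbar]
  have htμ := sq_spec_mul_inv_add_one_mul_gramMinEigenvalue hinv hgram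
  set t := spec (Upᵀ * Ubar * (Uᵀ * Ubar)⁻¹)
  set μ := (Uᵀ * Ubar).gramMinEigenvalue
  have hμ : 0 < μ := pos_of_mul_pos_right (htμ ▸ one_pos) (by positivity)
  have hμ1 : μ ≤ 1 := by nlinarith [sq_nonneg t]
  have ht : 0 ≤ t := norm_nonneg _
  show t = √(1 - √μ ^ 2) / √(1 - √(1 - √μ ^ 2) ^ 2)
  rw [Real.sq_sqrt hμ.le, Real.sq_sqrt (sub_nonneg.2 hμ1), sub_sub_cancel,
    ← Real.sqrt_div (sub_nonneg.2 hμ1), ← Real.sqrt_sq ht]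
  congr 1
  field_simp
  linarith

/-- ‖U⊥ᵀ Ū (Uᵀ Ū)⁻¹‖ = ‖sin Θ(U, Ū)‖ / √(1 − ‖sin Θ(U, Ū)‖²), where
‖sin Θ(U, Ū)‖ = √(1 − σ_r²(Uᵀ Ū)) and σ_r is the smallest singular value. -/
theorem stmt_9 {p r : ℕ} (hr : 0 < r)
    (U Ubar : Matrix (Fin p) (Fin r) ℝ) (Up : Matrix (Fin p) (Fin (p - r)) ℝ)
    (hU : Uᵀ * U = 1) (hUbar : Ubarᵀ * Ubar = 1) (hUp : Upᵀ * Up = 1)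
    (horth : Uᵀ * Up = 0) (hcomp : U * Uᵀ + Up * Upᵀ = 1)
    (hinv : IsUnit (Uᵀ * Ubar)) :
    (let σmin : ℝ :=
      Real.sqrt (⨅ i, (Matrix.isHermitian_transpose_mul_self (Uᵀ * Ubar)).eigenvalues i);
    let s : ℝ := Real.sqrt (1 - σmin ^ 2);
    spec (Upᵀ * Ubar * (Uᵀ * Ubar)⁻¹) = s / Real.sqrt (1 - s ^ 2)) :=
  stmt_9_general hr U Ubar Up hUbar hcomp hinv
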